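/- Let α, β ∈ (0,1) and k₁, k₂, k₃, k₄ ∈ ℝ. Then the pair u₁(x,t) = k₁ + k₄ Γ(β+1) t^α/Γ(α+1) - k₂² (Γ(β+1))² t^{2α}/Γ(2α+1) + k₂ x^β, u₂(x,t) = k₃ - k₁ k₂ Γ(β+1) t^α/Γ(α+1) - k₂ k₄ (Γ(β+1))² t^{2α}/Γ(2α+1) + k₂³ (Γ(β+1))³ t^{3α}/Γ(3α+1) + (k₄ - k₂² Γ(β+1) t^α/Γ(α+1)) x^β is an exact solution of the two-coupled system of time-space fractional PDEs modeling stationary transonic plane-parallel gas flow: for all x > 0 and t > 0, (C_t^α u₁)(x,t) = (C_x^β u₂)(x,t) and (C_t^α u₂)(x,t) = -u₁(x,t) (C_x^β u₁)(x,t). -/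

import Mathlib

/-!
The solution is built from powers `t ^ (n * α)` and `x ^ β`. For `γ > 0` and `α < 1` the Caputo
derivative of `s ↦ s ^ γ` is `Γ(γ + 1) / Γ(γ + 1 - α) * t ^ (γ - α)`: after differentiating, the
kernel integral `∫₀ᵗ s ^ (γ - 1) (t - s) ^ (-α) ds` is the Beta integral `B(γ, 1 - α) t ^ (γ - α)`.
Both equations of the system then become identities between the resulting closed forms.
-/

/-- Caputo fractional partial derivative of order `α` with respect to `t`. -/
noncomputable def caputoT (α : ℝ) (u : ℝ → ℝ → ℝ) : ℝ → ℝ → ℝ := fun x t =>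
  (1 / Real.Gamma (1 - α)) * ∫ s in (0:ℝ)..t, deriv (fun s' => u x s') s * (t - s) ^ (-α)

/-- Caputo fractional partial derivative of order `β` with respect to `x`. -/
noncomputable def caputoX (β : ℝ) (u : ℝ → ℝ → ℝ) : ℝ → ℝ → ℝ := fun x t =>
  (1 / Real.Gamma (1 - β)) * ∫ y in (0:ℝ)..x, deriv (fun y' => u y' t) y * (x - y) ^ (-β)

/-- The component
`u₁(x,t) = k₁ + k₄ Γ(β+1) t^α/Γ(α+1) - k₂² Γ(β+1)² t^(2α)/Γ(2α+1) + k₂ x^β`. -/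
noncomputable def u1Sol (α β k₁ k₂ k₄ : ℝ) : ℝ → ℝ → ℝ := fun x t =>
  k₁ + k₄ * Real.Gamma (β + 1) * t ^ α / Real.Gamma (α + 1)
    - k₂ ^ 2 * Real.Gamma (β + 1) ^ 2 * t ^ (2 * α) / Real.Gamma (2 * α + 1)
    + k₂ * x ^ β

/-- The component
`u₂(x,t) = k₃ - k₁k₂ Γ(β+1) t^α/Γ(α+1) - k₂k₄ Γ(β+1)² t^(2α)/Γ(2α+1)
           + k₂³ Γ(β+1)³ t^(3α)/Γ(3α+1) + (k₄ - k₂² Γ(β+1) t^α/Γ(α+1)) x^β`. -/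
noncomputable def u2Sol (α β k₁ k₂ k₃ k₄ : ℝ) : ℝ → ℝ → ℝ := fun x t =>
  k₃ - k₁ * k₂ * Real.Gamma (β + 1) * t ^ α / Real.Gamma (α + 1)
    - k₂ * k₄ * Real.Gamma (β + 1) ^ 2 * t ^ (2 * α) / Real.Gamma (2 * α + 1)
    + k₂ ^ 3 * Real.Gamma (β + 1) ^ 3 * t ^ (3 * α) / Real.Gamma (3 * α + 1)
    + (k₄ - k₂ ^ 2 * Real.Gamma (β + 1) * t ^ α / Real.Gamma (α + 1)) * x ^ β

open MeasureTheory Set Real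

theorem integral_rpow_mul_sub_rpow {p q t : ℝ} (hp : 0 < p) (hq : 0 < q) (ht : 0 < t) :
    ∫ s in (0 : ℝ)..t, s ^ (p - 1) * (t - s) ^ (q - 1) =
      Gamma p * Gamma q / Gamma (p + q) * t ^ (p + q - 1) := by
  have hreal : ∫ s in (0 : ℝ)..t, (s : ℂ) ^ ((p : ℂ) - 1) * ((t : ℂ) - s) ^ ((q : ℂ) - 1) =
      ((∫ s in (0 : ℝ)..t, s ^ (p - 1) * (t - s) ^ (q - 1) : ℝ) : ℂ) := by
    rw [← intervalIntegral.integral_ofReal]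
    refine intervalIntegral.integral_congr fun s hs => ?_
    rw [uIcc_of_le ht.le] at hs
    push_cast [Complex.ofReal_cpow hs.1, Complex.ofReal_cpow (sub_nonneg.2 hs.2)]
    rfl
  have hbeta := Complex.betaIntegral_scaled p q ht
  rw [hreal, Complex.betaIntegral_eq_Gamma_mul_div _ _ (by simpa) (by simpa)] at hbeta
  apply Complex.ofReal_injective
  rw [hbeta]
  push_cast [Complex.ofReal_cpow ht.le, ← Complex.Gamma_ofReal]
  ring

theorem intervalIntegrable_rpow_mul_sub_rpow {p q t : ℝ} (hp : 0 < p) (hq : 0 < q)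
    (ht : 0 < t) :
    IntervalIntegrable (fun s => s ^ (p - 1) * (t - s) ^ (q - 1)) volume 0 t := by
  -- a non-integrable function has integral `0`, but the value computed above is positive
  by_contra h
  have hvalue := integral_rpow_mul_sub_rpow hp hq ht
  rw [intervalIntegral.integral_undef h] at hvalue
  have := Gamma_pos_of_pos hp
  have := Gamma_pos_of_pos hq
  have := Gamma_pos_of_pos (add_pos hp hq)
  have := rpow_pos_of_pos ht (p + q - 1)
  exact absurd hvalue (by positivity)

noncomputable def caputo (α : ℝ) (f : ℝ → ℝ) (t : ℝ) : ℝ :=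
  1 / Gamma (1 - α) * ∫ s in (0 : ℝ)..t, deriv f s * (t - s) ^ (-α)

theorem caputoT_apply (α : ℝ) (u : ℝ → ℝ → ℝ) (x t : ℝ) :
    caputoT α u x t = caputo α (u x) t := rfl

theorem caputoX_apply (β : ℝ) (u : ℝ → ℝ → ℝ) (x t : ℝ) :
    caputoX β u x t = caputo β (fun y => u y t) x := rfl

theorem caputo_const_add_sum_rpow {ι : Type*} (S : Finset ι) (c : ℝ) (b γ : ι → ℝ) {α t : ℝ}
    (hγ : ∀ i ∈ S, 0 < γ i) (hα : α < 1) (ht : 0 < t) :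
    caputo α (fun s => c + ∑ i ∈ S, b i * s ^ γ i) t =
      ∑ i ∈ S, b i * Gamma (γ i + 1) / Gamma (γ i + 1 - α) * t ^ (γ i - α) := by
  have hα' : 0 < 1 - α := by linarith
  have hderiv : ∀ s, 0 < s → deriv (fun s => c + ∑ i ∈ S, b i * s ^ γ i) s =
      ∑ i ∈ S, b i * γ i * s ^ (γ i - 1) := fun s hs => by
    refine ((HasDerivAt.fun_sum fun i _ => ?_).const_add c).deriv
    simpa [mul_assoc] using (hasDerivAt_rpow_const (p := γ i) (Or.inl hs.ne')).const_mul (b i)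
  have hintegral :
      ∫ s in (0 : ℝ)..t, deriv (fun s => c + ∑ i ∈ S, b i * s ^ γ i) s * (t - s) ^ (-α) =
        ∑ i ∈ S, b i * γ i * ∫ s in (0 : ℝ)..t, s ^ (γ i - 1) * (t - s) ^ (1 - α - 1) := by
    simp_rw [← intervalIntegral.integral_const_mul]
    rw [← intervalIntegral.integral_finsetSum fun i hi =>
      (intervalIntegrable_rpow_mul_sub_rpow (hγ i hi) hα' ht).const_mul _]
    refine intervalIntegral.integral_congr_ae (.of_forall fun s hs => ?_)
    rw [uIoc_of_le ht.le] at hs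
    rw [hderiv s hs.1, Finset.sum_mul, sub_sub_cancel_left]
    simp only [mul_assoc]
  rw [caputo, hintegral, Finset.mul_sum]
  refine Finset.sum_congr rfl fun i hi => ?_
  have hγi := hγ i hi
  have := (Gamma_pos_of_pos hα').ne'
  rw [integral_rpow_mul_sub_rpow hγi hα' ht, Gamma_add_one hγi.ne', ← add_sub_assoc,
    show γ i + 1 - α - 1 = γ i - α by ring]
  field_simp

theorem caputo_const_add_mul_rpow (c b : ℝ) {β x : ℝ} (hβ₀ : 0 < β) (hβ₁ : β < 1) (hx : 0 < x) :
    caputo β (fun y => c + b * y ^ β) x = b * Gamma (β + 1) := by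
  simpa using caputo_const_add_sum_rpow {()} c (fun _ => b) (fun _ => β) (by simpa) hβ₁ hx

theorem caputo_cubic_in_rpow (c b₁ b₂ b₃ : ℝ) {α t : ℝ} (hα₀ : 0 < α) (hα₁ : α < 1) (ht : 0 < t) :
    caputo α (fun s => c + b₁ * s ^ α + b₂ * s ^ (2 * α) + b₃ * s ^ (3 * α)) t =
      b₁ * Gamma (α + 1) + b₂ * Gamma (2 * α + 1) / Gamma (α + 1) * t ^ α
        + b₃ * Gamma (3 * α + 1) / Gamma (2 * α + 1) * t ^ (2 * α) := by
  have h := caputo_const_add_sum_rpow Finset.univ c ![b₁, b₂, b₃] ![α, 2 * α, 3 * α]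
    (by simp [Fin.forall_fin_succ, hα₀]) hα₁ ht
  simp only [Fin.sum_univ_three, Matrix.cons_val_zero, Matrix.cons_val_one, Matrix.cons_val_two,
    Matrix.tail_cons, Matrix.head_cons] at h
  rw [show 2 * α + 1 - α = α + 1 by ring, show 3 * α + 1 - α = 2 * α + 1 by ring,
    show 2 * α - α = α by ring, show 3 * α - α = 2 * α by ring, add_sub_cancel_left, sub_self,
    rpow_zero, Gamma_one] at h
  simpa [add_assoc] using h

section GasFlow

variable {α β k₁ k₂ k₃ k₄ x t : ℝ}

theorem caputoT_u1Sol (hα₀ : 0 < α) (hα₁ : α < 1) (ht : 0 < t) :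
    caputoT α (u1Sol α β k₁ k₂ k₄) x t =
      k₄ * Gamma (β + 1) - k₂ ^ 2 * Gamma (β + 1) ^ 2 / Gamma (α + 1) * t ^ α := by
  have hu : u1Sol α β k₁ k₂ k₄ x = fun s => (k₁ + k₂ * x ^ β)
      + k₄ * Gamma (β + 1) / Gamma (α + 1) * s ^ α
      + -(k₂ ^ 2 * Gamma (β + 1) ^ 2 / Gamma (2 * α + 1)) * s ^ (2 * α) + 0 * s ^ (3 * α) := by
    funext s
    simp only [u1Sol]
    ring
  have := (Gamma_pos_of_pos (by linarith : 0 < α + 1)).ne'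
  have := (Gamma_pos_of_pos (by linarith : 0 < 2 * α + 1)).ne'
  rw [caputoT_apply, hu, caputo_cubic_in_rpow _ _ _ _ hα₀ hα₁ ht]
  field_simp
  ring

theorem caputoT_u2Sol (hα₀ : 0 < α) (hα₁ : α < 1) (ht : 0 < t) :
    caputoT α (u2Sol α β k₁ k₂ k₃ k₄) x t =
      -(k₁ * k₂ * Gamma (β + 1)) - k₂ ^ 2 * Gamma (β + 1) * x ^ β
        - k₂ * k₄ * Gamma (β + 1) ^ 2 / Gamma (α + 1) * t ^ α
        + k₂ ^ 3 * Gamma (β + 1) ^ 3 / Gamma (2 * α + 1) * t ^ (2 * α) := by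
  have hu : u2Sol α β k₁ k₂ k₃ k₄ x = fun s => (k₃ + k₄ * x ^ β)
      + -((k₁ * k₂ * Gamma (β + 1) + k₂ ^ 2 * Gamma (β + 1) * x ^ β) / Gamma (α + 1)) * s ^ α
      + -(k₂ * k₄ * Gamma (β + 1) ^ 2 / Gamma (2 * α + 1)) * s ^ (2 * α)
      + k₂ ^ 3 * Gamma (β + 1) ^ 3 / Gamma (3 * α + 1) * s ^ (3 * α) := by
    funext s
    simp only [u2Sol]
    ring
  have := (Gamma_pos_of_pos (by linarith : 0 < α + 1)).ne'
  have := (Gamma_pos_of_pos (by linarith : 0 < 2 * α + 1)).ne'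
  have := (Gamma_pos_of_pos (by linarith : 0 < 3 * α + 1)).ne'
  rw [caputoT_apply, hu, caputo_cubic_in_rpow _ _ _ _ hα₀ hα₁ ht]
  field_simp
  ring

theorem caputoX_u1Sol (hβ₀ : 0 < β) (hβ₁ : β < 1) (hx : 0 < x) :
    caputoX β (u1Sol α β k₁ k₂ k₄) x t = k₂ * Gamma (β + 1) :=
  caputo_const_add_mul_rpow _ k₂ hβ₀ hβ₁ hx

theorem caputoX_u2Sol (hβ₀ : 0 < β) (hβ₁ : β < 1) (hx : 0 < x) :
    caputoX β (u2Sol α β k₁ k₂ k₃ k₄) x t =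
      (k₄ - k₂ ^ 2 * Gamma (β + 1) * t ^ α / Gamma (α + 1)) * Gamma (β + 1) :=
  caputo_const_add_mul_rpow _ _ hβ₀ hβ₁ hx

end GasFlow

/-- **Exact solution of the two-coupled system of time-space fractional PDEs modeling
stationary transonic plane-parallel gas flow**:
`C_t^α u₁ = C_x^β u₂` and `C_t^α u₂ = -u₁ C_x^β u₁` for all `x > 0`, `t > 0`. -/
theorem fractional_gas_flow_exact (α β k₁ k₂ k₃ k₄ : ℝ)
    (hα : α ∈ Set.Ioo (0 : ℝ) 1) (hβ : β ∈ Set.Ioo (0 : ℝ) 1) :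
    ∀ x : ℝ, 0 < x → ∀ t : ℝ, 0 < t →
      caputoT α (u1Sol α β k₁ k₂ k₄) x t = caputoX β (u2Sol α β k₁ k₂ k₃ k₄) x t ∧
      caputoT α (u2Sol α β k₁ k₂ k₃ k₄) x t =
        -u1Sol α β k₁ k₂ k₄ x t * caputoX β (u1Sol α β k₁ k₂ k₄) x t := by
  intro x hx t ht
  rw [caputoT_u1Sol hα.1 hα.2 ht, caputoT_u2Sol hα.1 hα.2 ht,
    caputoX_u1Sol hβ.1 hβ.2 hx, caputoX_u2Sol hβ.1 hβ.2 hx, u1Sol]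
  have := (Gamma_pos_of_pos (by linarith [hα.1] : 0 < α + 1)).ne'
  have := (Gamma_pos_of_pos (by linarith [hα.1] : 0 < 2 * α + 1)).ne'
  constructor
  · field_simp
  · field_simp
    ring
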